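/- (Advantage discrepancy bound) For two kernels P, P' with max one-step TV distance δ₁, a policy π', discount γ∈[0,1), and ε = max_{s,a} |A^{P,π'}(s,a)|: | E_{τ∼P,π'}[Σ_{t=0}^∞ γ^t A^{P,π'}(s_t,a_t)] - E_{τ∼P',π'}[Σ_{t=0}^∞ γ^t A^{P,π'}(s_t,a_t)] | ≤ 2γ ε δ₁ / (1-γ)². -/

import Mathlib

open scoped BigOperators

variable {S A : Type*}

/-- `P` is a transition kernel: for each state-action pair, a probability
distribution over next states. -/
def IsKernel [Fintype S] (P : S → A → S → ℝ) : Prop :=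
  ∀ s a, (∀ s', 0 ≤ P s a s') ∧ ∑ s', P s a s' = 1

/-- `π` is a stochastic policy: for each state, a probability distribution over actions. -/
def IsPolicy [Fintype A] (π : S → A → ℝ) : Prop :=
  ∀ s, (∀ a, 0 ≤ π s a) ∧ ∑ a, π s a = 1

/-- `ρ` is a probability distribution over states. -/
def IsDist [Fintype S] (ρ : S → ℝ) : Prop :=
  (∀ s, 0 ≤ ρ s) ∧ ∑ s, ρ s = 1

/-- One step of the state-marginal evolution under kernel `P` and policy `π`. -/
noncomputable def stepMarginal [Fintype S] [Fintype A]
    (P : S → A → S → ℝ) (π : S → A → ℝ) (μ : S → ℝ) : S → ℝ :=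
  fun s' => ∑ s, μ s * ∑ a, π s a * P s a s'

/-- The time-`t` state marginal under kernel `P`, policy `π`, initial distribution `ρ`. -/
noncomputable def marginal [Fintype S] [Fintype A]
    (P : S → A → S → ℝ) (π : S → A → ℝ) (ρ : S → ℝ) : ℕ → S → ℝ
  | 0 => ρ
  | t + 1 => stepMarginal P π (marginal P π ρ t)

/-- Expected one-step reward when the current state is distributed according to `μ`. -/
noncomputable def expReward [Fintype S] [Fintype A]
    (P : S → A → S → ℝ) (π : S → A → ℝ) (r : S → A → S → ℝ) (μ : S → ℝ) : ℝ :=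
  ∑ s, μ s * ∑ a, π s a * ∑ s', P s a s' * r s a s'

/-- The expected discounted return `J(P, π)` with initial distribution `ρ`. -/
noncomputable def Jret [Fintype S] [Fintype A]
    (P : S → A → S → ℝ) (π : S → A → ℝ) (r : S → A → S → ℝ) (γ : ℝ) (ρ : S → ℝ) : ℝ :=
  ∑' t : ℕ, γ ^ t * expReward P π r (marginal P π ρ t)

/-- The value function `V^{P,π}(s)`: the return starting from state `s`. -/
noncomputable def Vval [Fintype S] [Fintype A] [DecidableEq S]
    (P : S → A → S → ℝ) (π : S → A → ℝ) (r : S → A → S → ℝ) (γ : ℝ) (s : S) : ℝ :=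
  Jret P π r γ (fun s' => if s' = s then 1 else 0)

/-- The state-action value function `Q^{P,π}(s,a)`. -/
noncomputable def Qval [Fintype S] [Fintype A] [DecidableEq S]
    (P : S → A → S → ℝ) (π : S → A → ℝ) (r : S → A → S → ℝ) (γ : ℝ) (s : S) (a : A) : ℝ :=
  ∑ s', P s a s' * (r s a s' + γ * Vval P π r γ s')

/-- The advantage function `A^{P,π}(s,a) = Q^{P,π}(s,a) - V^{P,π}(s)`. -/
noncomputable def Aval [Fintype S] [Fintype A] [DecidableEq S]
    (P : S → A → S → ℝ) (π : S → A → ℝ) (r : S → A → S → ℝ) (γ : ℝ) (s : S) (a : A) : ℝ :=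
  Qval P π r γ s a - Vval P π r γ s

/-!
Write `T_P μ` for `stepMarginal P π' μ` and `μ_t`, `ν_t` for the marginals under `P`, `P'`.
`T_P` is linear and `L¹`-nonexpansive, so from
`μ_{t+1} - ν_{t+1} = T_P (μ_t - ν_t) + (T_P - T_{P'}) ν_t` we get `‖μ_t - ν_t‖₁ ≤ 2 t δ₁`.
The expected advantage at time `t` is `⟨μ_t, f⟩` with `|f| ≤ ε`, so the two series differ
termwise by at most `2 t δ₁ ε γ^t`, and `∑ₜ t γ^t = γ / (1 - γ)²`.
-/

section Marginals

variable [Fintype S] [Fintype A]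

lemma IsDist.nonempty {ρ : S → ℝ} (hρ : IsDist ρ) : Nonempty S := by
  by_contra h
  have := hρ.2
  simp [not_nonempty_iff.mp h] at this

lemma IsDist.sum_abs {ρ : S → ℝ} (hρ : IsDist ρ) : ∑ s, |ρ s| = 1 := by
  simpa only [abs_of_nonneg (hρ.1 _)] using hρ.2

lemma abs_sum_mul_le_sum_abs_mul {w f : S → ℝ} {c : ℝ} (hf : ∀ s, |f s| ≤ c) :
    |∑ s, w s * f s| ≤ (∑ s, |w s|) * c :=
  calc |∑ s, w s * f s| ≤ ∑ s, |w s| * |f s| := by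
        simpa only [abs_mul] using Finset.abs_sum_le_sum_abs (fun s => w s * f s) Finset.univ
    _ ≤ ∑ s, |w s| * c := by gcongr with s; exact hf s
    _ = (∑ s, |w s|) * c := (Finset.sum_mul _ _ _).symm

lemma IsDist.abs_sum_mul_le {w f : S → ℝ} {c : ℝ} (hw : IsDist w) (hf : ∀ s, |f s| ≤ c) :
    |∑ s, w s * f s| ≤ c := by
  simpa only [hw.sum_abs, one_mul] using abs_sum_mul_le_sum_abs_mul (w := w) hf

lemma sum_stepMarginal {P : S → A → S → ℝ} {π : S → A → ℝ} (hP : IsKernel P)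
    (hπ : IsPolicy π) (μ : S → ℝ) : ∑ s', stepMarginal P π μ s' = ∑ s, μ s := by
  calc ∑ s', stepMarginal P π μ s' = ∑ s, μ s * ∑ a, π s a * ∑ s', P s a s' := by
        simp only [stepMarginal, Finset.mul_sum]
        rw [Finset.sum_comm]
        exact Finset.sum_congr rfl fun s _ => Finset.sum_comm
    _ = ∑ s, μ s := by simp [(hP _ _).2, (hπ _).2]

lemma IsDist.stepMarginal {P : S → A → S → ℝ} {π : S → A → ℝ} {μ : S → ℝ}
    (hμ : IsDist μ) (hP : IsKernel P) (hπ : IsPolicy π) : IsDist (stepMarginal P π μ) :=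
  ⟨fun s' => Finset.sum_nonneg fun s _ => mul_nonneg (hμ.1 s) <|
      Finset.sum_nonneg fun a _ => mul_nonneg ((hπ s).1 a) ((hP s a).1 s'),
    (sum_stepMarginal hP hπ μ).trans hμ.2⟩

lemma isDist_marginal {P : S → A → S → ℝ} {π : S → A → ℝ} {ρ : S → ℝ}
    (hP : IsKernel P) (hπ : IsPolicy π) (hρ : IsDist ρ) (t : ℕ) :
    IsDist (marginal P π ρ t) := by
  induction t with
  | zero => exact hρ
  | succ t ih => exact ih.stepMarginal hP hπ

lemma sum_abs_stepMarginal_le {P : S → A → S → ℝ} {π : S → A → ℝ} {c : ℝ}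
    (hπ : IsPolicy π) (hP : ∀ s a, ∑ s', |P s a s'| ≤ c) (μ : S → ℝ) :
    ∑ s', |stepMarginal P π μ s'| ≤ (∑ s, |μ s|) * c :=
  calc ∑ s', |stepMarginal P π μ s'|
      ≤ ∑ s', ∑ s, |μ s| * ∑ a, π s a * |P s a s'| := by
        refine Finset.sum_le_sum fun s' _ => (Finset.abs_sum_le_sum_abs _ _).trans ?_
        refine Finset.sum_le_sum fun s _ => ?_
        rw [abs_mul]
        refine mul_le_mul_of_nonneg_left ((Finset.abs_sum_le_sum_abs _ _).trans ?_) (abs_nonneg _)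
        simp only [abs_mul, abs_of_nonneg ((hπ s).1 _), le_refl]
    _ = ∑ s, |μ s| * ∑ a, π s a * ∑ s', |P s a s'| := by
        simp only [Finset.mul_sum]
        rw [Finset.sum_comm]
        exact Finset.sum_congr rfl fun s _ => Finset.sum_comm
    _ ≤ ∑ s, |μ s| * ∑ a, π s a * c := by
        gcongr with s _ a
        · exact (hπ s).1 a
        · exact hP s a
    _ = (∑ s, |μ s|) * c := by simp [← Finset.sum_mul, (hπ _).2]

lemma stepMarginal_sub_stepMarginal (P P' : S → A → S → ℝ) (π : S → A → ℝ) (μ ν : S → ℝ) :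
    stepMarginal P π μ - stepMarginal P' π ν =
      stepMarginal P π (μ - ν) + stepMarginal (P - P') π ν := by
  ext s'
  simp only [stepMarginal, Pi.add_apply, Pi.sub_apply, ← Finset.sum_sub_distrib,
    ← Finset.sum_add_distrib]
  refine Finset.sum_congr rfl fun s _ => ?_
  simp only [Finset.mul_sum, ← Finset.sum_sub_distrib, ← Finset.sum_add_distrib]
  exact Finset.sum_congr rfl fun a _ => by ring

lemma sum_abs_marginal_sub_le {P P' : S → A → S → ℝ} {π : S → A → ℝ} {ρ : S → ℝ} {δ : ℝ}
    (hP : IsKernel P) (hP' : IsKernel P') (hπ : IsPolicy π) (hρ : IsDist ρ)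
    (hδ : ∀ s a, ∑ s', |P s a s' - P' s a s'| ≤ δ) (t : ℕ) :
    ∑ s, |marginal P π ρ t s - marginal P' π ρ t s| ≤ t * δ := by
  induction t with
  | zero => simp [marginal]
  | succ t ih =>
    set μ := marginal P π ρ t
    set ν := marginal P' π ρ t
    have hdrift : ∑ s', |stepMarginal P π (μ - ν) s'| ≤ t * δ := by
      simpa using
        (sum_abs_stepMarginal_le hπ (fun s a => (IsDist.sum_abs (hP s a)).le) (μ - ν)).trans
          (mul_le_mul_of_nonneg_right ih zero_le_one)
    have hperturb : ∑ s', |stepMarginal (P - P') π ν s'| ≤ δ := by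
      have hν : IsDist ν := isDist_marginal hP' hπ hρ t
      simpa only [hν.sum_abs, one_mul] using sum_abs_stepMarginal_le hπ (P := P - P') hδ ν
    calc ∑ s', |stepMarginal P π μ s' - stepMarginal P' π ν s'|
        ≤ ∑ s', (|stepMarginal P π (μ - ν) s'| + |stepMarginal (P - P') π ν s'|) := by
          refine Finset.sum_le_sum fun s' _ => ?_
          rw [← Pi.sub_apply, stepMarginal_sub_stepMarginal]
          exact abs_add_le _ _
      _ ≤ (t + 1 : ℕ) * δ := by push_cast; rw [Finset.sum_add_distrib]; linarith

end Marginals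

lemma abs_tsum_geometric_mul_sub_le {γ C D : ℝ} {a b : ℕ → ℝ} (hγ0 : 0 ≤ γ) (hγ1 : γ < 1)
    (ha : ∀ t, |a t| ≤ C) (hb : ∀ t, |b t| ≤ C) (hab : ∀ t, |a t - b t| ≤ t * D) :
    |∑' t, γ ^ t * a t - ∑' t, γ ^ t * b t| ≤ γ * D / (1 - γ) ^ 2 := by
  have hγ : ‖γ‖ < 1 := by rwa [Real.norm_of_nonneg hγ0]
  have hsummable : ∀ x : ℕ → ℝ, (∀ t, |x t| ≤ C) → Summable fun t => γ ^ t * x t :=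
    fun x hx => .of_norm_bounded ((summable_geometric_of_lt_one hγ0 hγ1).mul_right C)
      fun t => by
        rw [Real.norm_eq_abs, abs_mul, abs_of_nonneg (pow_nonneg hγ0 t)]
        exact mul_le_mul_of_nonneg_left (hx t) (pow_nonneg hγ0 t)
  rw [← (hsummable a ha).tsum_sub (hsummable b hb), ← Real.norm_eq_abs]
  have hsum : HasSum (fun t : ℕ => D * (t * γ ^ t)) (D * (γ / (1 - γ) ^ 2)) :=
    (hasSum_coe_mul_geometric_of_norm_lt_one hγ).mul_left D
  refine (tsum_of_norm_bounded hsum fun t => ?_).trans_eq (by ring)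
  rw [Real.norm_eq_abs, ← mul_sub, abs_mul, abs_of_nonneg (pow_nonneg hγ0 t)]
  calc γ ^ t * |a t - b t| ≤ γ ^ t * (t * D) := by gcongr; exact hab t
    _ = D * (t * γ ^ t) := by ring

/-- advantage discrepancy bound: the expected discounted advantage sums
under trajectories generated by `P` versus `P'` differ by at most `2γεδ₁/(1-γ)²`. -/
theorem advantage_discrepancy [Fintype S] [Fintype A] [DecidableEq S]
    (P P' : S → A → S → ℝ) (π' : S → A → ℝ) (r : S → A → S → ℝ) (γ : ℝ) (ρ : S → ℝ)
    (ε δ₁ : ℝ)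
    (hP : IsKernel P) (hP' : IsKernel P') (hπ' : IsPolicy π') (hρ : IsDist ρ)
    (hγ0 : 0 ≤ γ) (hγ1 : γ < 1)
    (hε : ∀ s a, |Aval P π' r γ s a| ≤ ε)
    (hδ : ∀ s a, (1 / 2) * ∑ s', |P' s a s' - P s a s'| ≤ δ₁) :
    |(∑' t : ℕ, γ ^ t * ∑ s, marginal P π' ρ t s * ∑ a, π' s a * Aval P π' r γ s a) -
        ∑' t : ℕ, γ ^ t * ∑ s, marginal P' π' ρ t s * ∑ a, π' s a * Aval P π' r γ s a| ≤
      2 * γ * ε * δ₁ / (1 - γ) ^ 2 := by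
  set f : S → ℝ := fun s => ∑ a, π' s a * Aval P π' r γ s a
  have hf s : |f s| ≤ ε := IsDist.abs_sum_mul_le (hπ' s) (hε s)
  have hε0 : 0 ≤ ε := (abs_nonneg _).trans (hf hρ.nonempty.some)
  have hL1 s a : ∑ s', |P s a s' - P' s a s'| ≤ 2 * δ₁ := by
    simp_rw [abs_sub_comm (P s a _)]
    linarith [hδ s a]
  have hterm t : |∑ s, marginal P π' ρ t s * f s - ∑ s, marginal P' π' ρ t s * f s| ≤
      t * (2 * δ₁ * ε) := by
    rw [← Finset.sum_sub_distrib]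
    simp_rw [← sub_mul]
    calc _ ≤ (∑ s, |marginal P π' ρ t s - marginal P' π' ρ t s|) * ε :=
          abs_sum_mul_le_sum_abs_mul hf
      _ ≤ t * (2 * δ₁) * ε := by gcongr; exact sum_abs_marginal_sub_le hP hP' hπ' hρ hL1 t
      _ = t * (2 * δ₁ * ε) := by ring
  calc _ ≤ γ * (2 * δ₁ * ε) / (1 - γ) ^ 2 :=
        abs_tsum_geometric_mul_sub_le hγ0 hγ1
          (fun t => (isDist_marginal hP hπ' hρ t).abs_sum_mul_le hf)
          (fun t => (isDist_marginal hP' hπ' hρ t).abs_sum_mul_le hf) hterm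
    _ = 2 * γ * ε * δ₁ / (1 - γ) ^ 2 := by ring
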